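/- arXiv:2310.08294 — 2 statements merged into one kernel-verified Lean document; each statement's English description precedes it below -/
import Mathlib

section
/- For any $A \in \mathbb{R}$, $b, d > 0$, and $f \in \mathbb{R}$, the velocity field $u(t, x, y) = (A e^{(b-d)t} \cos(y), 0)$ with pressure $p(t, x, y) = -f A e^{(b-d)t} \sin(y)$ solves the rotating 2D Euler equations with backscatter: $\partial_t u + (u \cdot \nabla)u + f u^\perp + \nabla p = -(b\Delta + d\Delta^2)u$ and $\nabla \cdot u = 0$. In particular, for $b > d$ the $L^2$-norm of $u(t)$ on the torus grows unboundedly as $t \to \infty$. -/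
open MeasureTheory

/-- Partial derivative in the first spatial variable. -/
noncomputable def pdx (g : ℝ × ℝ → ℝ) (z : ℝ × ℝ) : ℝ := deriv (fun s => g (s, z.2)) z.1

/-- Partial derivative in the second spatial variable. -/
noncomputable def pdy (g : ℝ × ℝ → ℝ) (z : ℝ × ℝ) : ℝ := deriv (fun s => g (z.1, s)) z.2

/-- Horizontal Laplacian. -/
noncomputable def lapl (g : ℝ × ℝ → ℝ) (z : ℝ × ℝ) : ℝ := pdx (pdx g) z + pdy (pdy g) z

/-- Fundamental domain of the torus `ℝ²/2πℤ²`. -/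
def box : Set (ℝ × ℝ) := Set.Icc 0 (2*Real.pi) ×ˢ Set.Icc 0 (2*Real.pi)

/-! The solution is a shear flow `u = (a(t) cos y, 0)`. Since `u₁` depends on `y` only, the
advection term `(u·∇)u` vanishes and `u` is divergence free; the Coriolis force `f u^⊥ = (0, f u₁)`
is balanced by the pressure gradient `∇p = (0, -f u₁)`. As `Δ cos y = -cos y`, the backscatter
term `-(bΔ + dΔ²)u` equals `(b - d) u`, which is matched by `a' = (b - d) a`. Finally
`‖u(t)‖²_{L²} = 2π² a(t)²` grows like `exp (2 (b - d) t)`. -/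

lemma pdx_comp_snd (g : ℝ → ℝ) : pdx (fun z => g z.2) = 0 := by
  funext z
  simp [pdx]

lemma pdy_comp_snd (g : ℝ → ℝ) : pdy (fun z => g z.2) = fun z => deriv g z.2 := rfl

lemma lapl_comp_snd (g : ℝ → ℝ) : lapl (fun z => g z.2) = fun z => deriv^[2] g z.2 := by
  funext z
  simp [lapl, pdy_comp_snd, pdx]

lemma pdx_zero : pdx 0 = 0 := pdx_comp_snd 0

lemma pdy_zero : pdy 0 = 0 := by
  funext z
  simp [pdy]

lemma lapl_zero : lapl 0 = 0 := by
  funext z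
  simp [lapl, pdx_zero, pdy_zero]

lemma lapl_const_mul_cos (c : ℝ) :
    lapl (fun z => c * Real.cos z.2) = fun z => -c * Real.cos z.2 := by
  rw [lapl_comp_snd (fun y => c * Real.cos y)]
  simp

lemma setIntegral_box_comp_snd (g : ℝ → ℝ) :
    ∫ z in box, g z.2 = 2 * Real.pi * ∫ y in (0)..(2 * Real.pi), g y := by
  have h := setIntegral_prod_mul (μ := volume) (ν := volume) (fun _ : ℝ => (1 : ℝ)) g
    (Set.Icc 0 (2 * Real.pi)) (Set.Icc 0 (2 * Real.pi))
  simp only [one_mul, setIntegral_const, smul_eq_mul, mul_one] at h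
  rw [box, Measure.volume_eq_prod, h, intervalIntegral.integral_of_le Real.two_pi_pos.le,
    integral_Icc_eq_integral_Ioc, measureReal_def, Real.volume_Icc, sub_zero,
    ENNReal.toReal_ofReal Real.two_pi_pos.le]

lemma integral_box_sq_const_mul_cos (c : ℝ) :
    ∫ z in box, (c * Real.cos z.2) ^ 2 = 2 * Real.pi ^ 2 * c ^ 2 := by
  simp_rw [mul_pow]
  rw [setIntegral_box_comp_snd (fun y => c ^ 2 * Real.cos y ^ 2),
    intervalIntegral.integral_const_mul, integral_cos_sq, Real.sin_two_pi, Real.sin_zero]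
  ring

lemma deriv_const_mul_exp_mul_mul (A k c t : ℝ) :
    deriv (fun s => A * Real.exp (k * s) * c) t = k * (A * Real.exp (k * t) * c) :=
  ((((hasDerivAt_id t).const_mul k).exp.const_mul A).mul_const c).deriv.trans
    (by simp only [id]; ring)

lemma tendsto_integral_box_sq_const_mul_exp_mul_cos {A k : ℝ} (hA : A ≠ 0) (hk : 0 < k) :
    Filter.Tendsto (fun t => ∫ z in box, (A * Real.exp (k * t) * Real.cos z.2) ^ 2)
      Filter.atTop Filter.atTop := by
  have hL2 (t : ℝ) : ∫ z in box, (A * Real.exp (k * t) * Real.cos z.2) ^ 2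
      = 2 * Real.pi ^ 2 * A ^ 2 * Real.exp (2 * k * t) := by
    rw [integral_box_sq_const_mul_cos, mul_pow, ← Real.exp_nat_mul]
    ring_nf
  simp only [hL2]
  exact (Real.tendsto_exp_atTop.comp
    (Filter.tendsto_id.const_mul_atTop (by positivity))).const_mul_atTop (by positivity)

theorem explicit_growing_solution_2DEuler_backscatter_general (A b d f : ℝ) :
    let u1 : ℝ → ℝ × ℝ → ℝ := fun t z => A * Real.exp ((b - d)*t) * Real.cos z.2
    let u2 : ℝ → ℝ × ℝ → ℝ := fun _ _ => 0
    let p : ℝ → ℝ × ℝ → ℝ := fun t z => -(f * A) * Real.exp ((b - d)*t) * Real.sin z.2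
    -- first component of the momentum equation
    (∀ t z, deriv (fun s => u1 s z) t + u1 t z * pdx (u1 t) z + u2 t z * pdy (u1 t) z
        + f * (-(u2 t z)) + pdx (p t) z
        = -(b * lapl (u1 t) z + d * lapl (lapl (u1 t)) z)) ∧
    -- second component of the momentum equation
    (∀ t z, deriv (fun s => u2 s z) t + u1 t z * pdx (u2 t) z + u2 t z * pdy (u2 t) z
        + f * (u1 t z) + pdy (p t) z
        = -(b * lapl (u2 t) z + d * lapl (lapl (u2 t)) z)) ∧
    -- incompressibility
    (∀ t z, pdx (u1 t) z + pdy (u2 t) z = 0) ∧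
    -- unbounded growth of the L² norm for b > d
    (d < b → A ≠ 0 →
      Filter.Tendsto (fun t => ∫ z in box, ((u1 t z)^2 + (u2 t z)^2))
        Filter.atTop Filter.atTop) := by
  intro u1 u2 p
  set a : ℝ → ℝ := fun t => A * Real.exp ((b - d) * t)
  have hu1 (t : ℝ) : u1 t = fun z => a t * Real.cos z.2 := rfl
  have hp (t : ℝ) : p t = fun z => -f * a t * Real.sin z.2 := by
    funext z; simp only [p, a]; ring
  have hu2 (t : ℝ) : u2 t = 0 := rfl
  refine ⟨fun t z => ?_, fun t z => ?_, fun t z => ?_, fun hdb hA => ?_⟩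
  · rw [hu1, hp, lapl_const_mul_cos, lapl_const_mul_cos,
      pdx_comp_snd (fun y => a t * Real.cos y), pdx_comp_snd (fun y => -f * a t * Real.sin y),
      deriv_const_mul_exp_mul_mul]
    simp only [u2, Pi.zero_apply, a]
    ring
  · have hgeostrophic : pdy (p t) z = -(f * u1 t z) := by
      rw [hp, pdy_comp_snd (fun y => -f * a t * Real.sin y), deriv_const_mul_field',
        Real.deriv_sin]
      simp only [hu1]
      ring
    simp only [hu2, Pi.zero_apply, deriv_const', pdx_zero, pdy_zero, lapl_zero, hgeostrophic]
    ring
  · simp only [hu1, pdx_comp_snd (fun y => a t * Real.cos y), Pi.zero_apply, hu2, pdy_zero,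
      add_zero]
  · simpa [u1, u2] using tendsto_integral_box_sq_const_mul_exp_mul_cos hA (sub_pos.2 hdb)

theorem explicit_growing_solution_2DEuler_backscatter (A b d f : ℝ) (hb : 0 < b) (hd : 0 < d) :
    let u1 : ℝ → ℝ × ℝ → ℝ := fun t z => A * Real.exp ((b - d)*t) * Real.cos z.2
    let u2 : ℝ → ℝ × ℝ → ℝ := fun _ _ => 0
    let p : ℝ → ℝ × ℝ → ℝ := fun t z => -(f * A) * Real.exp ((b - d)*t) * Real.sin z.2
    -- first component of the momentum equation
    (∀ t z, deriv (fun s => u1 s z) t + u1 t z * pdx (u1 t) z + u2 t z * pdy (u1 t) z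
        + f * (-(u2 t z)) + pdx (p t) z
        = -(b * lapl (u1 t) z + d * lapl (lapl (u1 t)) z)) ∧
    -- second component of the momentum equation
    (∀ t z, deriv (fun s => u2 s z) t + u1 t z * pdx (u2 t) z + u2 t z * pdy (u2 t) z
        + f * (u1 t z) + pdy (p t) z
        = -(b * lapl (u2 t) z + d * lapl (lapl (u2 t)) z)) ∧
    -- incompressibility
    (∀ t z, pdx (u1 t) z + pdy (u2 t) z = 0) ∧
    -- unbounded growth of the L² norm for b > d
    (d < b → A ≠ 0 →
      Filter.Tendsto (fun t => ∫ z in box, ((u1 t z)^2 + (u2 t z)^2))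
        Filter.atTop Filter.atTop) :=
  explicit_growing_solution_2DEuler_backscatter_general A b d f
end

section
/- Let $u$ be a sufficiently smooth solution of the 2D Euler equations with backscatter on the torus with zero spatial mean at all times, and suppose $0 < b < d$. Then $\|u(t)\|_{L^2} \leq e^{-(d-b)t}\|u(0)\|_{L^2}$ for all $t \geq 0$. In particular every such solution converges exponentially to zero. -/
open MeasureTheory

open Real Set

section API
variable {g h : ℝ × ℝ → ℝ}

lemma hasDerivAt_slicex (hg : DifferentiableAt ℝ g z) :
    HasDerivAt (fun s => g (s, z.2)) (fderiv ℝ g z (1, 0)) z.1 := by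
  have h1 : HasDerivAt (fun s : ℝ => (s, z.2)) (1, 0) z.1 :=
    (hasDerivAt_id z.1).prodMk (hasDerivAt_const _ _)
  simpa [Function.comp_def] using (hg.hasFDerivAt.comp_hasDerivAt z.1 h1)

lemma hasDerivAt_slicey (hg : DifferentiableAt ℝ g z) :
    HasDerivAt (fun s => g (z.1, s)) (fderiv ℝ g z (0, 1)) z.2 := by
  have h1 : HasDerivAt (fun s : ℝ => (z.1, s)) (0, 1) z.2 :=
    (hasDerivAt_const _ _).prodMk (hasDerivAt_id z.2)
  simpa [Function.comp_def] using (hg.hasFDerivAt.comp_hasDerivAt z.2 h1)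

lemma pdx_eq (hg : DifferentiableAt ℝ g z) : pdx g z = fderiv ℝ g z (1, 0) :=
  (hasDerivAt_slicex hg).deriv

lemma hasDerivAt_pdx (hg : DifferentiableAt ℝ g z) :
    HasDerivAt (fun s => g (s, z.2)) (pdx g z) z.1 := by
  rw [pdx_eq hg]; exact hasDerivAt_slicex hg

lemma pdy_eq (hg : DifferentiableAt ℝ g z) : pdy g z = fderiv ℝ g z (0, 1) :=
  (hasDerivAt_slicey hg).deriv

lemma hasDerivAt_pdy (hg : DifferentiableAt ℝ g z) :
    HasDerivAt (fun s => g (z.1, s)) (pdy g z) z.2 := by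
  rw [pdy_eq hg]; exact hasDerivAt_slicey hg

lemma ContDiff.pdx_smooth (hg : ContDiff ℝ (⊤ : ℕ∞) g) : ContDiff ℝ (⊤ : ℕ∞) (pdx g) := by
  have : pdx g = fun z => fderiv ℝ g z (1, 0) := by
    funext z; exact pdx_eq (hg.differentiable (by simp) z)
  rw [this]
  exact (hg.fderiv_right (by simp)).clm_apply contDiff_const

lemma ContDiff.pdy_smooth (hg : ContDiff ℝ (⊤ : ℕ∞) g) : ContDiff ℝ (⊤ : ℕ∞) (pdy g) := by
  have : pdy g = fun z => fderiv ℝ g z (0, 1) := by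
    funext z; exact pdy_eq (hg.differentiable (by simp) z)
  rw [this]
  exact (hg.fderiv_right (by simp)).clm_apply contDiff_const

lemma ContDiff.lapl_smooth (hg : ContDiff ℝ (⊤ : ℕ∞) g) : ContDiff ℝ (⊤ : ℕ∞) (lapl g) :=
  (hg.pdx_smooth.pdx_smooth).add hg.pdy_smooth.pdy_smooth

/-- Periodicity bookkeeping. -/
structure DPeriodic (g : ℝ × ℝ → ℝ) : Prop where
  px : ∀ x y, g (x + 2*π, y) = g (x, y)
  py : ∀ x y, g (x, y + 2*π) = g (x, y)

lemma DPeriodic.pdx (hp : DPeriodic g) : DPeriodic (pdx g) := by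
  constructor
  · intro x y
    show deriv (fun s => g (s, y)) (x + 2*π) = deriv (fun s => g (s, y)) x
    have hper : Function.Periodic (fun s => g (s, y)) (2*π) := fun s => hp.px s y
    have := deriv_comp_add_const (fun s => g (s, y)) (2*π) x
    rw [← this]
    congr 1
    funext s; exact hp.px s y
  · intro x y
    show deriv (fun s => g (s, y + 2*π)) x = deriv (fun s => g (s, y)) x
    congr 1; funext s; exact hp.py s y

lemma DPeriodic.pdy (hp : DPeriodic g) : DPeriodic (pdy g) := by
  constructor
  · intro x y
    show deriv (fun s => g (x + 2*π, s)) y = deriv (fun s => g (x, s)) y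
    congr 1; funext s; exact hp.px x s
  · intro x y
    show deriv (fun s => g (x, s)) (y + 2*π) = deriv (fun s => g (x, s)) y
    have := deriv_comp_add_const (fun s => g (x, s)) (2*π) y
    rw [← this]
    congr 1; funext s; exact hp.py x s

lemma DPeriodic.lapl (hp : DPeriodic g) : DPeriodic (lapl g) :=
  ⟨fun x y => by unfold _root_.lapl; rw [hp.pdx.pdx.px, hp.pdy.pdy.px],
   fun x y => by unfold _root_.lapl; rw [hp.pdx.pdx.py, hp.pdy.pdy.py]⟩

lemma DPeriodic.mul (hg : DPeriodic g) (hh : DPeriodic h) : DPeriodic (fun z => g z * h z) :=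
  ⟨fun x y => by simp only [hg.px, hh.px], fun x y => by simp only [hg.py, hh.py]⟩

lemma DPeriodic.add (hg : DPeriodic g) (hh : DPeriodic h) : DPeriodic (fun z => g z + h z) :=
  ⟨fun x y => by simp only [hg.px, hh.px], fun x y => by simp only [hg.py, hh.py]⟩

lemma pdx_mul (hg : ContDiff ℝ (⊤ : ℕ∞) g) (hh : ContDiff ℝ (⊤ : ℕ∞) h) (z : ℝ × ℝ) :
    pdx (fun w => g w * h w) z = pdx g z * h z + g z * pdx h z := by
  have h1 := hasDerivAt_slicex (z := z) (hg.differentiable (by simp) z)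
  have h2 := hasDerivAt_slicex (z := z) (hh.differentiable (by simp) z)
  have : deriv (fun s => g (s, z.2) * h (s, z.2)) z.1 = _ := (h1.mul h2).deriv
  rw [pdx, show (fun s => (fun w => g w * h w) (s, z.2)) = fun s => g (s, z.2) * h (s, z.2) from rfl,
    this, pdx_eq (hg.differentiable (by simp) z),
    pdx_eq (hh.differentiable (by simp) z)]

lemma pdy_mul (hg : ContDiff ℝ (⊤ : ℕ∞) g) (hh : ContDiff ℝ (⊤ : ℕ∞) h) (z : ℝ × ℝ) :
    pdy (fun w => g w * h w) z = pdy g z * h z + g z * pdy h z := by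
  have h1 := hasDerivAt_slicey (z := z) (hg.differentiable (by simp) z)
  have h2 := hasDerivAt_slicey (z := z) (hh.differentiable (by simp) z)
  have : deriv (fun s => g (z.1, s) * h (z.1, s)) z.2 = _ := (h1.mul h2).deriv
  rw [pdy, show (fun s => (fun w => g w * h w) (z.1, s)) = fun s => g (z.1, s) * h (z.1, s) from rfl,
    this, pdy_eq (hg.differentiable (by simp) z),
    pdy_eq (hh.differentiable (by simp) z)]

lemma pdx_add (hg : ContDiff ℝ (⊤ : ℕ∞) g) (hh : ContDiff ℝ (⊤ : ℕ∞) h) (z : ℝ × ℝ) :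
    pdx (fun w => g w + h w) z = pdx g z + pdx h z := by
  have h1 := hasDerivAt_slicex (z := z) (hg.differentiable (by simp) z)
  have h2 := hasDerivAt_slicex (z := z) (hh.differentiable (by simp) z)
  have : deriv (fun s => g (s, z.2) + h (s, z.2)) z.1 = _ := (h1.add h2).deriv
  rw [pdx, show (fun s => (fun w => g w + h w) (s, z.2)) = fun s => g (s, z.2) + h (s, z.2) from rfl,
    this, pdx_eq (hg.differentiable (by simp) z),
    pdx_eq (hh.differentiable (by simp) z)]

lemma pdy_add (hg : ContDiff ℝ (⊤ : ℕ∞) g) (hh : ContDiff ℝ (⊤ : ℕ∞) h) (z : ℝ × ℝ) :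
    pdy (fun w => g w + h w) z = pdy g z + pdy h z := by
  have h1 := hasDerivAt_slicey (z := z) (hg.differentiable (by simp) z)
  have h2 := hasDerivAt_slicey (z := z) (hh.differentiable (by simp) z)
  have : deriv (fun s => g (z.1, s) + h (z.1, s)) z.2 = _ := (h1.add h2).deriv
  rw [pdy, show (fun s => (fun w => g w + h w) (z.1, s)) = fun s => g (z.1, s) + h (z.1, s) from rfl,
    this, pdy_eq (hg.differentiable (by simp) z),
    pdy_eq (hh.differentiable (by simp) z)]

end API

section BoxInt
variable {g h : ℝ × ℝ → ℝ}

lemma box_eq : box = Set.Icc ((0:ℝ),(0:ℝ)) (2*π, 2*π) := by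
  rw [box, Icc_prod_eq]

lemma isCompact_box : IsCompact box := by
  rw [box_eq]; exact isCompact_Icc

lemma measurableSet_box : MeasurableSet box := by
  rw [box_eq]; exact measurableSet_Icc

lemma integrableOn_box (hg : Continuous g) : IntegrableOn g box := by
  exact hg.continuousOn.integrableOn_compact isCompact_box

/-- Fubini on the box (first order). -/
lemma box_fubini (hg : Continuous g) :
    ∫ z in box, g z = ∫ x in Icc (0:ℝ) (2*π), ∫ y in Icc (0:ℝ) (2*π), g (x, y) := by
  rw [box]
  exact setIntegral_prod g (integrableOn_box hg)

/-- Fubini on the box (second order). -/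
lemma box_fubini' (hg : Continuous g) :
    ∫ z in box, g z = ∫ y in Icc (0:ℝ) (2*π), ∫ x in Icc (0:ℝ) (2*π), g (x, y) := by
  have hint : Integrable (Function.uncurry (fun x y => g (x, y)))
      ((volume.restrict (Icc (0:ℝ) (2*π))).prod (volume.restrict (Icc (0:ℝ) (2*π)))) := by
    rw [Measure.prod_restrict, ← Measure.volume_eq_prod]
    exact integrableOn_box hg
  rw [box_fubini hg]
  exact integral_integral_swap hint

lemma Icc_to_interval (f : ℝ → ℝ) :
    ∫ x in Icc (0:ℝ) (2*π), f x = ∫ x in (0:ℝ)..(2*π), f x := by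
  rw [intervalIntegral.integral_of_le (by positivity : (0:ℝ) ≤ 2*π),
    integral_Icc_eq_integral_Ioc]

/-- FTC slice in x : integral of pdx over the box is 0 for periodic smooth g. -/
lemma integral_pdx_eq_zero (hg : ContDiff ℝ (⊤ : ℕ∞) g) (hp : DPeriodic g) :
    ∫ z in box, pdx g z = 0 := by
  rw [box_fubini' hg.pdx_smooth.continuous]
  have : ∀ y : ℝ, ∫ x in Icc (0:ℝ) (2*π), pdx g (x, y) = 0 := by
    intro y
    rw [Icc_to_interval]
    have hftc : ∫ x in (0:ℝ)..(2*π), pdx g (x, y)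
        = g (2*π, y) - g (0, y) := by
      refine intervalIntegral.integral_eq_sub_of_hasDerivAt (f := fun x => g (x, y)) ?_ ?_
      · intro x _
        exact hasDerivAt_pdx (z := (x, y)) (hg.differentiable (by simp) (x, y))
      · exact (hg.pdx_smooth.continuous.comp (by fun_prop)).intervalIntegrable _ _
    rw [hftc]
    have := hp.px 0 y
    rw [zero_add] at this
    rw [this, sub_self]
  simp only [this, integral_zero]

/-- FTC slice in y : integral of pdy over the box is 0 for periodic smooth g. -/
lemma integral_pdy_eq_zero (hg : ContDiff ℝ (⊤ : ℕ∞) g) (hp : DPeriodic g) :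
    ∫ z in box, pdy g z = 0 := by
  rw [box_fubini hg.pdy_smooth.continuous]
  have : ∀ x : ℝ, ∫ y in Icc (0:ℝ) (2*π), pdy g (x, y) = 0 := by
    intro x
    rw [Icc_to_interval]
    have hftc : ∫ y in (0:ℝ)..(2*π), pdy g (x, y)
        = g (x, 2*π) - g (x, 0) := by
      refine intervalIntegral.integral_eq_sub_of_hasDerivAt (f := fun y => g (x, y)) ?_ ?_
      · intro y _
        exact hasDerivAt_pdy (z := (x, y)) (hg.differentiable (by simp) (x, y))
      · exact (hg.pdy_smooth.continuous.comp (by fun_prop)).intervalIntegrable _ _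
    rw [hftc]
    have := hp.py x 0
    rw [zero_add] at this
    rw [this, sub_self]
  simp only [this, integral_zero]

/-- Integration by parts in x. -/
lemma parts_x (hg : ContDiff ℝ (⊤ : ℕ∞) g) (hh : ContDiff ℝ (⊤ : ℕ∞) h) (hpg : DPeriodic g)
    (hph : DPeriodic h) :
    ∫ z in box, pdx g z * h z = - ∫ z in box, g z * pdx h z := by
  have key : ∫ z in box, (pdx g z * h z + g z * pdx h z) = 0 := by
    have : ∀ z, pdx g z * h z + g z * pdx h z = pdx (fun w => g w * h w) z := by
      intro z; rw [pdx_mul hg hh]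
    rw [integral_congr_ae (Filter.Eventually.of_forall (fun z => this z))]
    exact integral_pdx_eq_zero (hg.mul hh) (hpg.mul hph)
  have hi1 : IntegrableOn (fun z => pdx g z * h z) box :=
    integrableOn_box (hg.pdx_smooth.continuous.mul hh.continuous)
  have hi2 : IntegrableOn (fun z => g z * pdx h z) box :=
    integrableOn_box (hg.continuous.mul hh.pdx_smooth.continuous)
  rw [integral_add hi1 hi2] at key
  linarith

/-- Integration by parts in y. -/
lemma parts_y (hg : ContDiff ℝ (⊤ : ℕ∞) g) (hh : ContDiff ℝ (⊤ : ℕ∞) h) (hpg : DPeriodic g)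
    (hph : DPeriodic h) :
    ∫ z in box, pdy g z * h z = - ∫ z in box, g z * pdy h z := by
  have key : ∫ z in box, (pdy g z * h z + g z * pdy h z) = 0 := by
    have : ∀ z, pdy g z * h z + g z * pdy h z = pdy (fun w => g w * h w) z := by
      intro z; rw [pdy_mul hg hh]
    rw [integral_congr_ae (Filter.Eventually.of_forall (fun z => this z))]
    exact integral_pdy_eq_zero (hg.mul hh) (hpg.mul hph)
  have hi1 : IntegrableOn (fun z => pdy g z * h z) box :=
    integrableOn_box (hg.pdy_smooth.continuous.mul hh.continuous)
  have hi2 : IntegrableOn (fun z => g z * pdy h z) box :=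
    integrableOn_box (hg.continuous.mul hh.pdy_smooth.continuous)
  rw [integral_add hi1 hi2] at key
  linarith

/-- Green identity: `∫ g Δh = -∫ (∇g·∇h)`. -/
lemma green (hg : ContDiff ℝ (⊤ : ℕ∞) g) (hh : ContDiff ℝ (⊤ : ℕ∞) h) (hpg : DPeriodic g)
    (hph : DPeriodic h) :
    ∫ z in box, g z * lapl h z
      = - ∫ z in box, (pdx g z * pdx h z + pdy g z * pdy h z) := by
  have e1 : ∫ z in box, g z * pdx (pdx h) z = - ∫ z in box, pdx g z * pdx h z := by
    have := parts_x hh.pdx_smooth hg hph.pdx hpg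
    have h2 : ∫ z in box, g z * pdx (pdx h) z = ∫ z in box, pdx (pdx h) z * g z := by
      congr 1; funext z; ring
    have h3 : ∫ z in box, pdx g z * pdx h z = ∫ z in box, pdx h z * pdx g z := by
      congr 1; funext z; ring
    rw [h2, this, h3]
  have e2 : ∫ z in box, g z * pdy (pdy h) z = - ∫ z in box, pdy g z * pdy h z := by
    have := parts_y hh.pdy_smooth hg hph.pdy hpg
    have h2 : ∫ z in box, g z * pdy (pdy h) z = ∫ z in box, pdy (pdy h) z * g z := by
      congr 1; funext z; ring
    have h3 : ∫ z in box, pdy g z * pdy h z = ∫ z in box, pdy h z * pdy g z := by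
      congr 1; funext z; ring
    rw [h2, this, h3]
  have split : ∫ z in box, g z * lapl h z
      = (∫ z in box, g z * pdx (pdx h) z) + ∫ z in box, g z * pdy (pdy h) z := by
    rw [← integral_add (f := fun z => g z * pdx (pdx h) z) (g := fun z => g z * pdy (pdy h) z)
      (integrableOn_box (hg.continuous.mul hh.pdx_smooth.pdx_smooth.continuous))
      (integrableOn_box (hg.continuous.mul hh.pdy_smooth.pdy_smooth.continuous))]
    congr 1; funext z; rw [lapl]; ring
  rw [split, e1, e2, ← neg_add,
    ← integral_add (f := fun z => pdx g z * pdx h z) (g := fun z => pdy g z * pdy h z)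
      (integrableOn_box (hg.pdx_smooth.continuous.mul hh.pdx_smooth.continuous))
      (integrableOn_box (hg.pdy_smooth.continuous.mul hh.pdy_smooth.continuous))]

end BoxInt


section Wirt
open Complex

lemma h0T : (0:ℝ) < 0 + 2*π := by simpa using Real.two_pi_pos

lemma parseval_aux {w : ℝ → ℝ} (hw : Continuous w) (hper : ∀ x, w (x + 2*π) = w x) :
    (Summable fun n : ℤ => ‖fourierCoeffOn h0T (fun x => (w x : ℂ)) n‖ ^ 2) ∧
    (2*π) * ∑' n : ℤ, ‖fourierCoeffOn h0T (fun x => (w x : ℂ)) n‖ ^ 2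
      = ∫ x in (0:ℝ)..(2*π), (w x)^2 := by
  haveI hT : Fact (0 < 2*π) := ⟨Real.two_pi_pos⟩
  set F : ℝ → ℂ := fun x => (w x : ℂ) with hF
  have hFc : Continuous F := Complex.continuous_ofReal.comp hw
  have hper' : F 0 = F (0 + 2*π) := by simp only [hF]; rw [hper 0]
  set G := AddCircle.liftIco (2*π) 0 F with hG
  have hGc : Continuous G := AddCircle.liftIco_continuous hper' hFc.continuousOn
  set CG : C(AddCircle (2*π), ℂ) := ⟨G, hGc⟩ with hCG
  set EL := ContinuousMap.toLp (E := ℂ) 2 AddCircle.haarAddCircle ℂ CG with hEL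
  have hcoeff : ∀ n : ℤ, fourierCoeff ((EL : Lp ℂ 2 AddCircle.haarAddCircle) : AddCircle (2*π) → ℂ) n
      = fourierCoeffOn h0T F n := by
    intro n
    rw [hEL, fourierCoeff_toLp]
    exact fourierCoeff_liftIco_eq (a := 0) F n
  have hmem := lp.memℓp (fourierBasis.repr EL)
  rw [memℓp_gen_iff (by norm_num)] at hmem
  have hsum : Summable fun n : ℤ =>
      ‖fourierCoeff ((EL : Lp ℂ 2 AddCircle.haarAddCircle) : AddCircle (2*π) → ℂ) n‖ ^ 2 := by
    refine Summable.congr hmem ?_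
    intro n
    rw [show (ENNReal.toReal 2) = ((2:ℕ):ℝ) by norm_num, Real.rpow_natCast, fourierBasis_repr]
  have hpars := tsum_sq_fourierCoeff EL
  have h1 : ∫ t, ‖((EL : Lp ℂ 2 AddCircle.haarAddCircle) : AddCircle (2*π) → ℂ) t‖^2 ∂AddCircle.haarAddCircle
      = ∫ t, ‖G t‖^2 ∂AddCircle.haarAddCircle := by
    apply integral_congr_ae
    filter_upwards [ContinuousMap.coeFn_toLp (p := 2) AddCircle.haarAddCircle (𝕜 := ℂ) CG] with t ht
    rw [hEL, ht]; rfl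
  have hvol : ∫ (b : AddCircle (2*π)), ‖G b‖^2 ∂volume
      = (2*π) * ∫ t, ‖G t‖^2 ∂AddCircle.haarAddCircle := by
    rw [AddCircle.volume_eq_smul_haarAddCircle, integral_smul_measure,
      ENNReal.toReal_ofReal Real.two_pi_pos.le, smul_eq_mul]
  have hpre := AddCircle.intervalIntegral_preimage (2*π) 0 (fun t => ‖G t‖^2)
  have hleft : ∫ x in (0:ℝ)..(0+2*π), ‖G ↑x‖^2 = ∫ x in (0:ℝ)..(2*π), (w x)^2 := by
    rw [zero_add]
    rw [intervalIntegral.integral_of_le Real.two_pi_pos.le,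
      intervalIntegral.integral_of_le Real.two_pi_pos.le,
      integral_Ioc_eq_integral_Ioo, integral_Ioc_eq_integral_Ioo]
    apply setIntegral_congr_fun measurableSet_Ioo
    intro x hx
    have hmemx : x ∈ Set.Ico (0:ℝ) (2*π) := ⟨hx.1.le, hx.2⟩
    show ‖G ↑x‖^2 = (w x)^2
    rw [hG, AddCircle.liftIco_zero_coe_apply hmemx]
    simp [hF, sq_abs]
  constructor
  · exact (summable_congr (fun n => by rw [hcoeff n])).mp hsum
  · calc (2*π) * ∑' n : ℤ, ‖fourierCoeffOn h0T (fun x => (w x:ℂ)) n‖ ^ 2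
        = (2*π) * ∑' n : ℤ,
          ‖fourierCoeff ((EL : Lp ℂ 2 AddCircle.haarAddCircle) : AddCircle (2*π) → ℂ) n‖ ^ 2 := by
          rw [tsum_congr (fun n => by rw [← hcoeff n])]
      _ = (2*π) * ∫ t, ‖((EL : Lp ℂ 2 AddCircle.haarAddCircle) : AddCircle (2*π) → ℂ) t‖^2
            ∂AddCircle.haarAddCircle := by rw [hpars]
      _ = (2*π) * ∫ t, ‖G t‖^2 ∂AddCircle.haarAddCircle := by rw [h1]
      _ = ∫ (b : AddCircle (2*π)), ‖G b‖^2 ∂volume := hvol.symm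
      _ = ∫ x in (0:ℝ)..(0+2*π), ‖G ↑x‖^2 := hpre.symm
      _ = ∫ x in (0:ℝ)..(2*π), (w x)^2 := hleft

lemma wirtinger {h h' : ℝ → ℝ} (hd : ∀ x, HasDerivAt h (h' x) x) (hc' : Continuous h')
    (hper : ∀ x, h (x + 2*π) = h x) (hmean : ∫ x in (0:ℝ)..(2*π), h x = 0) :
    ∫ x in (0:ℝ)..(2*π), (h x)^2 ≤ ∫ x in (0:ℝ)..(2*π), (h' x)^2 := by
  have hc : Continuous h := by
    rw [continuous_iff_continuousAt]; exact fun x => (hd x).continuousAt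
  have hper' : ∀ x, h' (x + 2*π) = h' x := by
    intro x
    have e1 : h' x = deriv h x := ((hd x).deriv).symm
    have e2 : h' (x + 2*π) = deriv h (x + 2*π) := ((hd (x + 2*π)).deriv).symm
    have e3 : deriv h (x + 2*π) = deriv (fun y => h (y + 2*π)) x := by
      rw [deriv_comp_add_const]
    have e4 : (fun y => h (y + 2*π)) = h := by funext y; exact hper y
    rw [e2, e3, e4, ← e1]
  obtain ⟨S1, P1⟩ := parseval_aux hc hper
  obtain ⟨S2, P2⟩ := parseval_aux hc' hper'
  have hcomp : ∀ n : ℤ, ‖fourierCoeffOn h0T (fun x => (h x:ℂ)) n‖^2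
      ≤ ‖fourierCoeffOn h0T (fun x => (h' x:ℂ)) n‖^2 := by
    intro n
    rcases eq_or_ne n 0 with rfl | hn
    · have h0 : fourierCoeffOn h0T (fun x => (h x:ℂ)) 0 = 0 := by
        rw [fourierCoeffOn_eq_integral]
        simp only [neg_zero, fourier_zero, one_smul]
        rw [intervalIntegral.integral_ofReal]
        rw [zero_add] at *
        rw [hmean]
        simp
      rw [h0]
      simp [sq_nonneg]
    · have hder : ∀ x ∈ Set.uIcc (0:ℝ) (0+2*π), HasDerivAt (fun x => (h x:ℂ)) ((h' x:ℂ)) x :=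
        fun x _ => (hd x).ofReal_comp
      have hint : IntervalIntegrable (fun x => (h' x:ℂ)) volume 0 (0+2*π) :=
        (Complex.continuous_ofReal.comp hc').intervalIntegrable _ _
      have hrel := fourierCoeffOn_of_hasDerivAt h0T hn hder hint
      simp only [hper 0, sub_self, mul_zero, zero_sub] at hrel
      have hD : ‖(-2 * (π:ℂ) * I * (n:ℂ))‖ = 2*π*|(n:ℝ)| := by
        simp only [norm_mul, Complex.norm_I, mul_one]
        rw [show ((-2) : ℂ) = ((-2 : ℝ) : ℂ) by norm_num]
        rw [Complex.norm_real, Complex.norm_real, Complex.norm_intCast]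
        rw [Real.norm_eq_abs, Real.norm_eq_abs]
        rw [abs_of_pos Real.pi_pos]
        push_cast
        norm_num
      have hnormeq : ‖fourierCoeffOn h0T (fun x => (h x:ℂ)) n‖
          = 1/(2*π*|(n:ℝ)|) * ((2*π) * ‖fourierCoeffOn h0T (fun x => (h' x:ℂ)) n‖) := by
        rw [hrel, norm_mul, norm_neg, norm_mul, norm_div, norm_one, hD]
        congr 1
        rw [show ((0:ℝ):ℂ) = 0 by norm_num, sub_zero, Complex.norm_real, Real.norm_eq_abs,
          abs_of_pos (by simpa using Real.two_pi_pos)]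
        ring
      have h1n : (1:ℝ) ≤ |(n:ℝ)| := by
        rw [← Int.cast_abs]
        exact_mod_cast Int.one_le_abs hn
      have hfin : ‖fourierCoeffOn h0T (fun x => (h x:ℂ)) n‖
          ≤ ‖fourierCoeffOn h0T (fun x => (h' x:ℂ)) n‖ := by
        rw [hnormeq]
        rw [show 1/(2*π*|(n:ℝ)|) * ((2*π) * ‖fourierCoeffOn h0T (fun x => (h' x:ℂ)) n‖)
            = ‖fourierCoeffOn h0T (fun x => (h' x:ℂ)) n‖ / |(n:ℝ)| by
          field_simp]
        exact div_le_self (norm_nonneg _) h1n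
      exact pow_le_pow_left₀ (norm_nonneg _) hfin 2
  calc ∫ x in (0:ℝ)..(2*π), (h x)^2
      = (2*π) * ∑' n : ℤ, ‖fourierCoeffOn h0T (fun x => (h x:ℂ)) n‖ ^ 2 := P1.symm
    _ ≤ (2*π) * ∑' n : ℤ, ‖fourierCoeffOn h0T (fun x => (h' x:ℂ)) n‖ ^ 2 := by
        apply mul_le_mul_of_nonneg_left _ Real.two_pi_pos.le
        exact Summable.tsum_le_tsum hcomp S1 S2
    _ = ∫ x in (0:ℝ)..(2*π), (h' x)^2 := P2

end Wirt

section Poincare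
variable {g : ℝ × ℝ → ℝ}

/-- Cauchy–Schwarz for the constant 1. -/
lemma sq_integral_le {f : ℝ → ℝ} (hf : Continuous f) :
    (∫ x in (0:ℝ)..(2*π), f x)^2 ≤ (2*π) * ∫ x in (0:ℝ)..(2*π), (f x)^2 := by
  set I := ∫ x in (0:ℝ)..(2*π), f x with hI
  set c : ℝ := I / (2*π) with hc
  have hfi : IntervalIntegrable f volume 0 (2*π) := hf.intervalIntegrable _ _
  have hfi2 : IntervalIntegrable (fun x => (f x)^2) volume 0 (2*π) :=
    (hf.pow 2).intervalIntegrable _ _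
  have hfc : IntervalIntegrable (fun x => 2*c*(f x)) volume 0 (2*π) :=
    (continuous_const.mul hf).intervalIntegrable _ _
  have expand : ∫ x in (0:ℝ)..(2*π), (f x - c)^2
      = (∫ x in (0:ℝ)..(2*π), (f x)^2) - 2*c*I + c^2*(2*π) := by
    have : ∀ x : ℝ, (f x - c)^2 = (f x)^2 - 2*c*(f x) + c^2 := by intro x; ring
    rw [intervalIntegral.integral_congr (fun x _ => this x)]
    rw [intervalIntegral.integral_add (hfi2.sub hfc) (intervalIntegrable_const),
      intervalIntegral.integral_sub hfi2 hfc, intervalIntegral.integral_const_mul,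
      intervalIntegral.integral_const, hI]
    simp only [smul_eq_mul, sub_zero]
    ring
  have pos : 0 ≤ ∫ x in (0:ℝ)..(2*π), (f x - c)^2 :=
    intervalIntegral.integral_nonneg Real.two_pi_pos.le (fun x _ => sq_nonneg _)
  rw [expand] at pos
  have hπ : (0:ℝ) < 2*π := Real.two_pi_pos
  have hI2 : I = (2*π) * c := by rw [hc]; field_simp
  rw [hI2] at pos ⊢
  nlinarith [mul_nonneg Real.two_pi_pos.le pos, sq_nonneg c]

/-- Differentiation under the interval integral (in the second variable). -/
lemma avgx_hasDerivAt {G : ℝ × ℝ → ℝ} (hG : ContDiff ℝ (⊤ : ℕ∞) G) (y₀ : ℝ) :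
    HasDerivAt (fun y => ∫ x in (0:ℝ)..(2*π), G (x, y))
      (∫ x in (0:ℝ)..(2*π), pdy G (x, y₀)) y₀ := by
  have hKc : IsCompact (Icc (0:ℝ) (2*π) ×ˢ Icc (y₀-1) (y₀+1)) :=
    isCompact_Icc.prod isCompact_Icc
  obtain ⟨C, hC⟩ := hKc.exists_bound_of_continuousOn hG.pdy_smooth.continuous.continuousOn
  refine (intervalIntegral.hasDerivAt_integral_of_dominated_loc_of_deriv_le
    (F := fun y x => G (x, y)) (F' := fun y x => pdy G (x, y)) (bound := fun _ => C)
    (a := 0) (b := 2*π) (x₀ := y₀) (s := Metric.ball y₀ 1) (Metric.ball_mem_nhds _ one_pos) ?_ ?_ ?_ ?_ ?_ ?_).2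
  · exact Filter.Eventually.of_forall (fun y =>
      ((hG.continuous.comp (by fun_prop))).aestronglyMeasurable)
  · exact (hG.continuous.comp (by fun_prop)).intervalIntegrable _ _
  · exact (hG.pdy_smooth.continuous.comp (by fun_prop)).aestronglyMeasurable
  · refine Filter.Eventually.of_forall (fun x hx y hy => ?_)
    rw [Set.uIoc_of_le Real.two_pi_pos.le] at hx
    have hx' : x ∈ Icc (0:ℝ) (2*π) := Ioc_subset_Icc_self hx
    have hy' : y ∈ Icc (y₀-1) (y₀+1) := by
      have := Metric.mem_ball.mp hy
      rw [Real.dist_eq] at this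
      constructor <;> [linarith [abs_lt.mp this]; linarith [abs_lt.mp this]]
    exact hC (x, y) ⟨hx', hy'⟩
  · exact intervalIntegrable_const
  · refine Filter.Eventually.of_forall (fun x hx y hy => ?_)
    exact hasDerivAt_pdy (z := (x, y)) (hG.differentiable (by simp) (x, y))

end Poincare

section Poincare2
variable {g : ℝ × ℝ → ℝ}

lemma cont_slice_x {f : ℝ × ℝ → ℝ} (hf : Continuous f) (y : ℝ) :
    Continuous fun x => f (x, y) := hf.comp (continuous_id.prodMk continuous_const)

lemma cont_slice_y {f : ℝ × ℝ → ℝ} (hf : Continuous f) (x : ℝ) :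
    Continuous fun y => f (x, y) := hf.comp (continuous_const.prodMk continuous_id)

lemma int_slice_x {f : ℝ × ℝ → ℝ} (hf : Continuous f) (y : ℝ) :
    IntegrableOn (fun x => f (x, y)) (Icc (0:ℝ) (2*π)) :=
  (cont_slice_x hf y).continuousOn.integrableOn_compact isCompact_Icc

lemma int_const_Icc (c : ℝ) : IntegrableOn (fun _ : ℝ => c) (Icc (0:ℝ) (2*π)) :=
  integrableOn_const (by rw [Real.volume_Icc]; exact ENNReal.ofReal_ne_top)

lemma int_outer {f : ℝ × ℝ → ℝ} (hf : Continuous f) :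
    Integrable (fun y => ∫ x in Icc (0:ℝ) (2*π), f (x, y))
      (volume.restrict (Icc (0:ℝ) (2*π))) := by
  have h1 : Integrable f
      ((volume.restrict (Icc (0:ℝ) (2*π))).prod (volume.restrict (Icc (0:ℝ) (2*π)))) := by
    rw [Measure.prod_restrict, ← Measure.volume_eq_prod]
    exact integrableOn_box hf
  exact h1.integral_prod_right

/-- Poincaré inequality on the box for mean-zero doubly periodic smooth functions. -/
lemma poincare_box (hg : ContDiff ℝ (⊤ : ℕ∞) g) (hp : DPeriodic g)
    (hmean : ∫ z in box, g z = 0) :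
    ∫ z in box, (g z)^2 ≤ ∫ z in box, ((pdx g z)^2 + (pdy g z)^2) := by
  have hπ : (0:ℝ) < 2*π := Real.two_pi_pos
  set m : ℝ → ℝ := fun y => (1/(2*π)) * ∫ x in (0:ℝ)..(2*π), g (x, y) with hm
  set m' : ℝ → ℝ := fun y => (1/(2*π)) * ∫ x in (0:ℝ)..(2*π), pdy g (x, y) with hm'
  have hm_deriv : ∀ y, HasDerivAt m (m' y) y := fun y =>
    (avgx_hasDerivAt hg y).const_mul _
  have hm'_deriv : ∀ y, HasDerivAt m' ((1/(2*π)) * ∫ x in (0:ℝ)..(2*π), pdy (pdy g) (x, y)) y :=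
    fun y => (avgx_hasDerivAt hg.pdy_smooth y).const_mul _
  have hm_cont : Continuous m := by
    rw [continuous_iff_continuousAt]; exact fun y => (hm_deriv y).continuousAt
  have hm'_cont : Continuous m' := by
    rw [continuous_iff_continuousAt]; exact fun y => (hm'_deriv y).continuousAt
  have hint_g : ∀ y, ∫ x in Icc (0:ℝ) (2*π), g (x, y) = 2*π * m y := by
    intro y
    rw [Icc_to_interval, hm]
    field_simp
  have hm_per : ∀ y, m (y + 2*π) = m y := by
    intro y
    rw [hm]
    simp only
    congr 1
    exact intervalIntegral.integral_congr (fun x _ => hp.py x y)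
  have hm_mean : ∫ y in (0:ℝ)..(2*π), m y = 0 := by
    have h1 : ∫ y in (0:ℝ)..(2*π), m y
        = (1/(2*π)) * ∫ y in (0:ℝ)..(2*π), (∫ x in (0:ℝ)..(2*π), g (x, y)) := by
      rw [hm, intervalIntegral.integral_const_mul]
    have h2 : ∫ y in (0:ℝ)..(2*π), (∫ x in (0:ℝ)..(2*π), g (x, y))
        = ∫ y in Icc (0:ℝ) (2*π), (∫ x in Icc (0:ℝ) (2*π), g (x, y)) := by
      rw [← Icc_to_interval]
      apply setIntegral_congr_fun measurableSet_Icc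
      intro y _
      exact (Icc_to_interval _).symm
    rw [h1, h2, ← box_fubini' hg.continuous, hmean, mul_zero]
  set r : ℝ × ℝ → ℝ := fun z => g z - m z.2 with hr
  have hr_cont : Continuous r := hg.continuous.sub (hm_cont.comp continuous_snd)
  -- step 1 : decomposition
  have cross_zero : ∫ z in box, (2 * r z * m z.2) = 0 := by
    rw [box_fubini' (by fun_prop : Continuous (fun z : ℝ × ℝ => 2 * r z * m z.2))]
    have inner_zero : ∀ y : ℝ, ∫ x in Icc (0:ℝ) (2*π), (2 * r (x, y) * m y) = 0 := by
      intro y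
      have e1 : ∀ x : ℝ, 2 * r (x, y) * m y = (g (x, y) - m y) * (2 * m y) := by
        intro x; rw [hr]; ring
      rw [setIntegral_congr_fun measurableSet_Icc (fun x _ => e1 x), integral_mul_const]
      have e2 : ∫ x in Icc (0:ℝ) (2*π), (g (x, y) - m y)
          = (∫ x in Icc (0:ℝ) (2*π), g (x, y)) - 2*π * m y := by
        rw [integral_sub (int_slice_x hg.continuous y) (int_const_Icc (m y))]
        congr 1
        rw [setIntegral_const, Real.volume_real_Icc, max_eq_left (by linarith), smul_eq_mul,
          sub_zero]
      rw [e2, hint_g, sub_self, zero_mul]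
    have : ∀ y ∈ Icc (0:ℝ) (2*π), (fun y => ∫ x in Icc (0:ℝ) (2*π), (2 * r (x, y) * m y)) y = 0 :=
      fun y _ => inner_zero y
    rw [setIntegral_congr_fun measurableSet_Icc this, integral_zero]
  have decomp : ∫ z in box, (g z)^2
      = (∫ z in box, (r z)^2) + ∫ z in box, (m z.2)^2 := by
    have pt : ∀ z : ℝ × ℝ, (g z)^2 = ((r z)^2 + 2 * r z * m z.2) + (m z.2)^2 := by
      intro z; rw [hr]; ring
    rw [setIntegral_congr_fun measurableSet_box (fun z _ => pt z)]
    rw [integral_add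
        (integrableOn_box (by fun_prop : Continuous fun z : ℝ × ℝ => (r z)^2 + 2 * r z * m z.2))
        (integrableOn_box (by fun_prop : Continuous fun z : ℝ × ℝ => (m z.2)^2)),
      integral_add (integrableOn_box (by fun_prop : Continuous fun z => (r z)^2))
        (integrableOn_box (by fun_prop : Continuous fun z : ℝ × ℝ => 2 * r z * m z.2)),
      cross_zero, add_zero]
  -- step 2 : ∫ r² ≤ ∫ (pdx g)²
  have step2 : ∫ z in box, (r z)^2 ≤ ∫ z in box, (pdx g z)^2 := by
    rw [box_fubini' (by fun_prop : Continuous (fun z => (r z)^2)),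
      box_fubini' (g := fun z => (pdx g z)^2) (hg.pdx_smooth.continuous.pow 2)]
    refine integral_mono (int_outer (f := fun z => (r z)^2) (by fun_prop))
      (int_outer (f := fun z => (pdx g z)^2) (hg.pdx_smooth.continuous.pow 2)) ?_
    intro y
    show (∫ x in Icc (0:ℝ) (2*π), (r (x, y))^2) ≤ ∫ x in Icc (0:ℝ) (2*π), (pdx g (x, y))^2
    rw [Icc_to_interval, Icc_to_interval]
    refine wirtinger (h := fun x => g (x, y) - m y) (h' := fun x => pdx g (x, y))
      (fun x => (hasDerivAt_pdx (z := (x, y)) (hg.differentiable (by simp) (x, y))).sub_const _)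
      (cont_slice_x hg.pdx_smooth.continuous y)
      (fun x => by simp only [hp.px x y])
      ?_
    rw [intervalIntegral.integral_sub ((cont_slice_x hg.continuous y).intervalIntegrable _ _)
      intervalIntegrable_const, intervalIntegral.integral_const, smul_eq_mul]
    have := hint_g y
    rw [Icc_to_interval] at this
    rw [this]; ring
  -- step 3 : middle term
  have step3 : ∫ z in box, (m z.2)^2 ≤ ∫ z in box, (pdy g z)^2 := by
    have e1 : ∫ z in box, (m z.2)^2 = 2*π * ∫ y in (0:ℝ)..(2*π), (m y)^2 := by
      rw [box_fubini' (by fun_prop : Continuous (fun z : ℝ × ℝ => (m z.2)^2))]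
      have hconst : ∀ y ∈ Icc (0:ℝ) (2*π),
          (fun y => ∫ _x in Icc (0:ℝ) (2*π), (m y)^2) y = (fun y => 2*π * (m y)^2) y := by
        intro y _
        show ∫ _x in Icc (0:ℝ) (2*π), (m y)^2 = 2*π * (m y)^2
        rw [setIntegral_const, Real.volume_real_Icc, max_eq_left (by linarith), smul_eq_mul,
          sub_zero]
      rw [setIntegral_congr_fun measurableSet_Icc hconst, Icc_to_interval,
        ← intervalIntegral.integral_const_mul]
    have e2 : ∫ y in (0:ℝ)..(2*π), (m y)^2 ≤ ∫ y in (0:ℝ)..(2*π), (m' y)^2 :=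
      wirtinger hm_deriv hm'_cont hm_per hm_mean
    have e3 : 2*π * ∫ y in (0:ℝ)..(2*π), (m' y)^2 ≤ ∫ z in box, (pdy g z)^2 := by
      rw [box_fubini' (g := fun z => (pdy g z)^2) (hg.pdy_smooth.continuous.pow 2)]
      have ptw : ∀ y : ℝ, 2*π * (m' y)^2 ≤ ∫ x in (0:ℝ)..(2*π), (pdy g (x, y))^2 := by
        intro y
        have hcs := sq_integral_le (f := fun x => pdy g (x, y))
          (cont_slice_x hg.pdy_smooth.continuous y)
        have hsq : (m' y)^2 = (1/(2*π))^2 * (∫ x in (0:ℝ)..(2*π), pdy g (x, y))^2 := by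
          rw [hm']; ring
        rw [hsq]
        calc 2*π * ((1/(2*π))^2 * (∫ x in (0:ℝ)..(2*π), pdy g (x, y))^2)
            ≤ 2*π * ((1/(2*π))^2 * ((2*π) * ∫ x in (0:ℝ)..(2*π), (pdy g (x, y))^2)) := by
              apply mul_le_mul_of_nonneg_left _ (by positivity)
              exact mul_le_mul_of_nonneg_left hcs (by positivity)
          _ = ∫ x in (0:ℝ)..(2*π), (pdy g (x, y))^2 := by field_simp
      have hmono : ∫ y in Icc (0:ℝ) (2*π), 2*π * (m' y)^2
          ≤ ∫ y in Icc (0:ℝ) (2*π), (∫ x in Icc (0:ℝ) (2*π), (pdy g (x, y))^2) := by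
        refine integral_mono ?_ (int_outer (f := fun z => (pdy g z)^2) (hg.pdy_smooth.continuous.pow 2)) ?_
        · exact ((by fun_prop : Continuous (fun y => 2*π*(m' y)^2)).continuousOn.integrableOn_compact
            isCompact_Icc)
        · intro y
          show 2*π * (m' y)^2 ≤ ∫ x in Icc (0:ℝ) (2*π), (pdy g (x, y))^2
          rw [Icc_to_interval]
          exact ptw y
      calc 2*π * ∫ y in (0:ℝ)..(2*π), (m' y)^2
          = ∫ y in Icc (0:ℝ) (2*π), 2*π * (m' y)^2 := by
            rw [Icc_to_interval, intervalIntegral.integral_const_mul]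
        _ ≤ _ := hmono
    calc ∫ z in box, (m z.2)^2 = 2*π * ∫ y in (0:ℝ)..(2*π), (m y)^2 := e1
      _ ≤ 2*π * ∫ y in (0:ℝ)..(2*π), (m' y)^2 := mul_le_mul_of_nonneg_left e2 (by positivity)
      _ ≤ ∫ z in box, (pdy g z)^2 := e3
  have final : ∫ z in box, ((pdx g z)^2 + (pdy g z)^2)
      = (∫ z in box, (pdx g z)^2) + ∫ z in box, (pdy g z)^2 :=
    integral_add (integrableOn_box (hg.pdx_smooth.continuous.pow 2))
      (integrableOn_box (hg.pdy_smooth.continuous.pow 2))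
  rw [decomp, final]
  exact add_le_add step2 step3

end Poincare2

section Energy
variable {g v1 v2 φ : ℝ × ℝ → ℝ}

lemma box_cs {u v : ℝ × ℝ → ℝ} (hu : Continuous u) (hv : Continuous v) :
    (∫ z in box, u z * v z)^2 ≤ (∫ z in box, (u z)^2) * (∫ z in box, (v z)^2) := by
  set A := ∫ z in box, (u z)^2 with hA
  set B := ∫ z in box, u z * v z with hB
  set C := ∫ z in box, (v z)^2 with hC
  have expand : ∀ t : ℝ, 0 ≤ A - 2*t*B + t^2*C := by
    intro t
    have h0 : 0 ≤ ∫ z in box, (u z - t * v z)^2 :=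
      setIntegral_nonneg measurableSet_box (fun z _ => sq_nonneg _)
    have he : ∫ z in box, (u z - t*v z)^2 = A - 2*t*B + t^2*C := by
      have pt : ∀ z : ℝ × ℝ, (u z - t*v z)^2
          = ((u z)^2 - 2*t*(u z * v z)) + t^2*(v z)^2 := by intro z; ring
      rw [setIntegral_congr_fun measurableSet_box (fun z _ => pt z),
        integral_add
          (integrableOn_box (by fun_prop : Continuous fun z : ℝ × ℝ => (u z)^2 - 2*t*(u z * v z)))
          (integrableOn_box (by fun_prop : Continuous fun z : ℝ × ℝ => t^2*(v z)^2)),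
        integral_sub (f := fun z => (u z)^2) (integrableOn_box (hu.pow 2))
          (integrableOn_box (by fun_prop : Continuous fun z : ℝ × ℝ => 2*t*(u z * v z))),
        MeasureTheory.integral_const_mul, MeasureTheory.integral_const_mul]
    linarith [h0, he.symm.le, he.le]
  have hCnn : 0 ≤ C := setIntegral_nonneg measurableSet_box (fun z _ => sq_nonneg _)
  rcases eq_or_lt_of_le hCnn with hC0 | hC0
  · have hBz : B = 0 := by
      by_contra hBne
      have h1 := expand ((A+1)/(2*B))
      rw [← hC0] at h1
      have : 2*((A+1)/(2*B))*B = A + 1 := by field_simp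
      rw [this] at h1
      nlinarith [h1, sq_nonneg ((A+1)/(2*B))]
    rw [hBz, ← hC0, mul_zero]
    norm_num
  · set t := B/C with ht
    have hBt : B = t*C := by rw [ht]; field_simp
    have h1 := expand t
    rw [hBt] at h1
    have h2 : 0 ≤ A - t^2*C := by nlinarith [h1]
    have hBsq : B^2 = (t^2*C)*C := by rw [hBt]; ring
    rw [hBsq]
    nlinarith [h2, hC0]

lemma grad_le_lapl (hg : ContDiff ℝ (⊤ : ℕ∞) g) (hp : DPeriodic g)
    (hmean : ∫ z in box, g z = 0) :
    ∫ z in box, ((pdx g z)^2 + (pdy g z)^2) ≤ ∫ z in box, (lapl g z)^2 := by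
  set N1 := ∫ z in box, ((pdx g z)^2 + (pdy g z)^2) with hN1d
  set N2 := ∫ z in box, (lapl g z)^2 with hN2d
  have hgreen : ∫ z in box, g z * lapl g z = -N1 := by
    rw [green hg hg hp hp, hN1d]
    congr 1
    apply setIntegral_congr_fun measurableSet_box
    intro z _
    ring
  have hcs := box_cs hg.continuous hg.lapl_smooth.continuous
  rw [hgreen, neg_sq] at hcs
  have hpoin := poincare_box hg hp hmean
  have hN1 : 0 ≤ N1 := setIntegral_nonneg measurableSet_box (fun z _ => by positivity)
  have hN2 : 0 ≤ N2 := setIntegral_nonneg measurableSet_box (fun z _ => sq_nonneg _)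
  have h2 : (∫ z in box, (g z)^2) * N2 ≤ N1 * N2 := mul_le_mul_of_nonneg_right hpoin hN2
  rcases eq_or_lt_of_le hN1 with h0 | h0
  · rw [← h0]; exact hN2
  · refine le_of_mul_le_mul_left ?_ h0
    nlinarith [hcs, h2]

lemma green_symm (hg : ContDiff ℝ (⊤ : ℕ∞) g) (hh : ContDiff ℝ (⊤ : ℕ∞) φ) (hpg : DPeriodic g)
    (hph : DPeriodic φ) :
    ∫ z in box, g z * lapl φ z = ∫ z in box, lapl g z * φ z := by
  rw [green hg hh hpg hph]
  have h2 := green hh hg hph hpg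
  have e1 : ∫ z in box, lapl g z * φ z = ∫ z in box, φ z * lapl g z := by
    apply setIntegral_congr_fun measurableSet_box; intro z _; ring
  rw [e1, h2]
  congr 1
  apply setIntegral_congr_fun measurableSet_box; intro z _; ring

lemma green_self (hg : ContDiff ℝ (⊤ : ℕ∞) g) (hp : DPeriodic g) :
    ∫ z in box, g z * lapl g z = -∫ z in box, ((pdx g z)^2 + (pdy g z)^2) := by
  rw [green hg hg hp hp]
  congr 1
  apply setIntegral_congr_fun measurableSet_box
  intro z _
  ring

lemma bilapl_energy (hg : ContDiff ℝ (⊤ : ℕ∞) g) (hp : DPeriodic g) :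
    ∫ z in box, g z * lapl (lapl g) z = ∫ z in box, (lapl g z)^2 := by
  rw [green_symm hg hg.lapl_smooth hp hp.lapl]
  apply setIntegral_congr_fun measurableSet_box; intro z _; ring

lemma div_transport (hv1 : ContDiff ℝ (⊤ : ℕ∞) v1) (hv2 : ContDiff ℝ (⊤ : ℕ∞) v2) (hφ : ContDiff ℝ (⊤ : ℕ∞) φ)
    (pv1 : DPeriodic v1) (pv2 : DPeriodic v2) (pφ : DPeriodic φ)
    (hdiv : ∀ z, pdx v1 z + pdy v2 z = 0) :
    ∫ z in box, (v1 z * pdx φ z + v2 z * pdy φ z) = 0 := by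
  have pt : ∀ z, v1 z * pdx φ z + v2 z * pdy φ z
      = pdx (fun w => v1 w * φ w) z + pdy (fun w => v2 w * φ w) z := by
    intro z
    rw [pdx_mul hv1 hφ, pdy_mul hv2 hφ]
    linear_combination (-(φ z)) * (hdiv z)
  rw [setIntegral_congr_fun measurableSet_box (fun z _ => pt z),
    integral_add (integrableOn_box ((hv1.mul hφ).pdx_smooth.continuous))
      (integrableOn_box ((hv2.mul hφ).pdy_smooth.continuous)),
    integral_pdx_eq_zero (hv1.mul hφ) (pv1.mul pφ),
    integral_pdy_eq_zero (hv2.mul hφ) (pv2.mul pφ), add_zero]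

end Energy

section Time
variable {U : ℝ → ℝ × ℝ → ℝ}

noncomputable def dtt (U : ℝ → ℝ × ℝ → ℝ) (t : ℝ) (z : ℝ × ℝ) : ℝ :=
  fderiv ℝ (fun q : ℝ × (ℝ × ℝ) => U q.1 q.2) (t, z) (1, (0, 0))

lemma hasDerivAt_dtt (hU : ContDiff ℝ (⊤ : ℕ∞) (fun q : ℝ × (ℝ × ℝ) => U q.1 q.2)) (t : ℝ) (z : ℝ × ℝ) :
    HasDerivAt (fun s => U s z) (dtt U t z) t := by
  have h1 : HasDerivAt (fun s : ℝ => ((s, z) : ℝ × (ℝ × ℝ))) (1, (0, 0)) t :=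
    (hasDerivAt_id t).prodMk (hasDerivAt_const _ _)
  have h2 := (hU.differentiable (by simp) (t, z)).hasFDerivAt.comp_hasDerivAt t h1
  simpa [dtt, Function.comp_def] using h2

lemma cont_dtt (hU : ContDiff ℝ (⊤ : ℕ∞) (fun q : ℝ × (ℝ × ℝ) => U q.1 q.2)) :
    Continuous (fun q : ℝ × (ℝ × ℝ) => dtt U q.1 q.2) := by
  have he : (fun q : ℝ × (ℝ × ℝ) => dtt U q.1 q.2)
      = fun q : ℝ × (ℝ × ℝ) => fderiv ℝ (fun q : ℝ × (ℝ × ℝ) => U q.1 q.2) q (1, (0, 0)) := by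
    funext q; rw [dtt]
  rw [he]
  have hcd : ContDiff ℝ (⊤ : ℕ∞) (fun q : ℝ × (ℝ × ℝ) =>
      fderiv ℝ (fun q : ℝ × (ℝ × ℝ) => U q.1 q.2) q (1, (0, 0))) :=
    (hU.fderiv_right (by simp)).clm_apply contDiff_const
  exact hcd.continuous

lemma slice_smooth (hU : ContDiff ℝ (⊤ : ℕ∞) (fun q : ℝ × (ℝ × ℝ) => U q.1 q.2)) (t : ℝ) :
    ContDiff ℝ (⊤ : ℕ∞) (U t) := by
  have he : U t = (fun q : ℝ × (ℝ × ℝ) => U q.1 q.2) ∘ (fun z => (t, z)) := rfl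
  rw [he]
  exact hU.comp (contDiff_const.prodMk contDiff_id)

lemma energy_hasDerivAt {u1 u2 : ℝ → ℝ × ℝ → ℝ}
    (h1 : ContDiff ℝ (⊤ : ℕ∞) (fun q : ℝ × (ℝ × ℝ) => u1 q.1 q.2))
    (h2 : ContDiff ℝ (⊤ : ℕ∞) (fun q : ℝ × (ℝ × ℝ) => u2 q.1 q.2)) (t₀ : ℝ) :
    HasDerivAt (fun t => ∫ z in box, ((u1 t z)^2 + (u2 t z)^2))
      (∫ z in box, (2 * u1 t₀ z * dtt u1 t₀ z + 2 * u2 t₀ z * dtt u2 t₀ z)) t₀ := by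
  set F' : ℝ → ℝ × ℝ → ℝ := fun t z => 2 * u1 t z * dtt u1 t z + 2 * u2 t z * dtt u2 t z with hF'
  have hctsF' : Continuous (fun q : ℝ × (ℝ × ℝ) => F' q.1 q.2) :=
    ((continuous_const.mul h1.continuous).mul (cont_dtt h1)).add
      ((continuous_const.mul h2.continuous).mul (cont_dtt h2))
  have hKc : IsCompact ((Icc (t₀-1) (t₀+1)) ×ˢ box) := isCompact_Icc.prod isCompact_box
  obtain ⟨C, hC⟩ := hKc.exists_bound_of_continuousOn hctsF'.continuousOn
  have key := hasDerivAt_integral_of_dominated_loc_of_deriv_le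
    (μ := volume.restrict box) (F := fun t z => (u1 t z)^2 + (u2 t z)^2) (F' := F')
    (x₀ := t₀) (bound := fun _ => C) (s := Metric.ball t₀ 1) (Metric.ball_mem_nhds _ one_pos)
    (Filter.Eventually.of_forall (fun t =>
      ((((slice_smooth h1 t).continuous.pow 2).add
        ((slice_smooth h2 t).continuous.pow 2))).aestronglyMeasurable))
    (integrableOn_box (((slice_smooth h1 t₀).continuous.pow 2).add
        ((slice_smooth h2 t₀).continuous.pow 2)))
    ((hctsF'.comp (continuous_const.prodMk continuous_id)).aestronglyMeasurable)
    ?_ ?_ ?_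
  · exact key.2
  · filter_upwards [ae_restrict_mem measurableSet_box] with z hz
    intro t ht
    have ht' : t ∈ Icc (t₀-1) (t₀+1) := by
      have := Metric.mem_ball.mp ht
      rw [Real.dist_eq] at this
      constructor <;> [linarith [abs_lt.mp this]; linarith [abs_lt.mp this]]
    exact hC (t, z) ⟨ht', hz⟩
  · haveI : IsFiniteMeasure (volume.restrict box) :=
      ⟨by rw [Measure.restrict_apply_univ]; exact isCompact_box.measure_lt_top⟩
    exact integrable_const C
  · filter_upwards [ae_restrict_mem measurableSet_box] with z _
    intro t _
    have d1 := hasDerivAt_dtt h1 t z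
    have d2 := hasDerivAt_dtt h2 t z
    have hsum : HasDerivAt (fun s => u1 s z * u1 s z + u2 s z * u2 s z) _ t := (d1.mul d1).add (d2.mul d2)
    have hfe : (fun s => (u1 s z)^2 + (u2 s z)^2)
        = fun s => u1 s z * u1 s z + u2 s z * u2 s z := by funext s; ring
    show HasDerivAt (fun s => (u1 s z)^2 + (u2 s z)^2) (F' t z) t
    rw [hfe]
    convert hsum using 1
    show 2 * u1 t z * dtt u1 t z + 2 * u2 t z * dtt u2 t z = _
    ring
end Time

/-- A (sufficiently smooth, spatially `2π`-periodic) solution `u = (u1,u2)`, pressure `p`,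
of the rotating 2D Euler equations with backscatter
`∂ₜ u + (u·∇)u + f u^⊥ + ∇p = -(bΔ + dΔ²)u`, `∇·u = 0` on the torus. -/
structure IsBackscatterEulerSolution (b d f : ℝ) (u1 u2 p : ℝ → ℝ × ℝ → ℝ) : Prop where
  smooth1 : ContDiff ℝ (⊤ : ℕ∞) (fun q : ℝ × (ℝ × ℝ) => u1 q.1 q.2)
  smooth2 : ContDiff ℝ (⊤ : ℕ∞) (fun q : ℝ × (ℝ × ℝ) => u2 q.1 q.2)
  smoothp : ContDiff ℝ (⊤ : ℕ∞) (fun q : ℝ × (ℝ × ℝ) => p q.1 q.2)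
  periodic1x : ∀ t x y, u1 t (x + 2*Real.pi, y) = u1 t (x, y)
  periodic1y : ∀ t x y, u1 t (x, y + 2*Real.pi) = u1 t (x, y)
  periodic2x : ∀ t x y, u2 t (x + 2*Real.pi, y) = u2 t (x, y)
  periodic2y : ∀ t x y, u2 t (x, y + 2*Real.pi) = u2 t (x, y)
  periodicpx : ∀ t x y, p t (x + 2*Real.pi, y) = p t (x, y)
  periodicpy : ∀ t x y, p t (x, y + 2*Real.pi) = p t (x, y)
  mom1 : ∀ t z, deriv (fun s => u1 s z) t + u1 t z * pdx (u1 t) z + u2 t z * pdy (u1 t) z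
      + f * (-(u2 t z)) + pdx (p t) z
      = -(b * lapl (u1 t) z + d * lapl (lapl (u1 t)) z)
  mom2 : ∀ t z, deriv (fun s => u2 s z) t + u1 t z * pdx (u2 t) z + u2 t z * pdy (u2 t) z
      + f * (u1 t z) + pdy (p t) z
      = -(b * lapl (u2 t) z + d * lapl (lapl (u2 t)) z)
  divfree : ∀ t z, pdx (u1 t) z + pdy (u2 t) z = 0

theorem exponential_decay_2DEuler_backscatter (b d f : ℝ) (hb : 0 < b) (hbd : b < d)
    (u1 u2 p : ℝ → ℝ × ℝ → ℝ)
    (hsol : IsBackscatterEulerSolution b d f u1 u2 p)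
    (hmean : ∀ t : ℝ, (∫ z in box, u1 t z) = 0 ∧ (∫ z in box, u2 t z) = 0) :
    ∀ t : ℝ, 0 ≤ t →
      Real.sqrt (∫ z in box, ((u1 t z)^2 + (u2 t z)^2))
        ≤ Real.exp (-(d - b)*t) * Real.sqrt (∫ z in box, ((u1 0 z)^2 + (u2 0 z)^2)) := by
  have hsm1 := hsol.smooth1
  have hsm2 := hsol.smooth2
  have cu1 : ∀ s : ℝ, ContDiff ℝ (⊤ : ℕ∞) (u1 s) := slice_smooth hsm1
  have cu2 : ∀ s : ℝ, ContDiff ℝ (⊤ : ℕ∞) (u2 s) := slice_smooth hsm2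
  have cp : ∀ s : ℝ, ContDiff ℝ (⊤ : ℕ∞) (p s) := slice_smooth hsol.smoothp
  have pu1 : ∀ s : ℝ, DPeriodic (u1 s) := fun s =>
    ⟨fun x y => hsol.periodic1x s x y, fun x y => hsol.periodic1y s x y⟩
  have pu2 : ∀ s : ℝ, DPeriodic (u2 s) := fun s =>
    ⟨fun x y => hsol.periodic2x s x y, fun x y => hsol.periodic2y s x y⟩
  have pp : ∀ s : ℝ, DPeriodic (p s) := fun s =>
    ⟨fun x y => hsol.periodicpx s x y, fun x y => hsol.periodicpy s x y⟩
  set E : ℝ → ℝ := fun s => ∫ z in box, ((u1 s z)^2 + (u2 s z)^2) with hEdef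
  set D : ℝ → ℝ := fun s => ∫ z in box, (2 * u1 s z * dtt u1 s z + 2 * u2 s z * dtt u2 s z)
    with hDdef
  have hE' : ∀ s, HasDerivAt E (D s) s := fun s => energy_hasDerivAt hsm1 hsm2 s
  have hEnn : ∀ s, 0 ≤ E s := fun s =>
    setIntegral_nonneg measurableSet_box (fun z _ => by positivity)
  have hdt1 : ∀ s z, dtt u1 s z = -(u1 s z * pdx (u1 s) z) - u2 s z * pdy (u1 s) z
      + f * u2 s z - pdx (p s) z - b * lapl (u1 s) z - d * lapl (lapl (u1 s)) z := by
    intro s z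
    have hm := hsol.mom1 s z
    have hd : deriv (fun σ => u1 σ z) s = dtt u1 s z := (hasDerivAt_dtt hsm1 s z).deriv
    rw [hd] at hm
    linarith
  have hdt2 : ∀ s z, dtt u2 s z = -(u1 s z * pdx (u2 s) z) - u2 s z * pdy (u2 s) z
      - f * u1 s z - pdy (p s) z - b * lapl (u2 s) z - d * lapl (lapl (u2 s)) z := by
    intro s z
    have hm := hsol.mom2 s z
    have hd : deriv (fun σ => u2 σ z) s = dtt u2 s z := (hasDerivAt_dtt hsm2 s z).deriv
    rw [hd] at hm
    linarith
  have hDle : ∀ s, D s ≤ -(2*(d-b)) * E s := by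
    intro s
    have cφ : ContDiff ℝ (⊤ : ℕ∞) (fun w => u1 s w * u1 s w + u2 s w * u2 s w) :=
      ((cu1 s).mul (cu1 s)).add ((cu2 s).mul (cu2 s))
    have pφ : DPeriodic (fun w => u1 s w * u1 s w + u2 s w * u2 s w) :=
      ((pu1 s).mul (pu1 s)).add ((pu2 s).mul (pu2 s))
    have pt : ∀ z, 2 * u1 s z * dtt u1 s z + 2 * u2 s z * dtt u2 s z
        = -(u1 s z * pdx (fun w => u1 s w * u1 s w + u2 s w * u2 s w) z
            + u2 s z * pdy (fun w => u1 s w * u1 s w + u2 s w * u2 s w) z)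
          + (-2) * (u1 s z * pdx (p s) z + u2 s z * pdy (p s) z)
          + (-(2*b)) * (u1 s z * lapl (u1 s) z + u2 s z * lapl (u2 s) z)
          + (-(2*d)) * (u1 s z * lapl (lapl (u1 s)) z + u2 s z * lapl (lapl (u2 s)) z) := by
      intro z
      rw [hdt1 s z, hdt2 s z,
        pdx_add ((cu1 s).mul (cu1 s)) ((cu2 s).mul (cu2 s)),
        pdy_add ((cu1 s).mul (cu1 s)) ((cu2 s).mul (cu2 s)),
        pdx_mul (cu1 s) (cu1 s), pdx_mul (cu2 s) (cu2 s),
        pdy_mul (cu1 s) (cu1 s), pdy_mul (cu2 s) (cu2 s)]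
      ring
    have cG1 : Continuous (fun z => u1 s z * pdx (fun w => u1 s w * u1 s w + u2 s w * u2 s w) z
        + u2 s z * pdy (fun w => u1 s w * u1 s w + u2 s w * u2 s w) z) :=
      ((cu1 s).continuous.mul cφ.pdx_smooth.continuous).add
        ((cu2 s).continuous.mul cφ.pdy_smooth.continuous)
    have cG2 : Continuous (fun z => u1 s z * pdx (p s) z + u2 s z * pdy (p s) z) :=
      ((cu1 s).continuous.mul (cp s).pdx_smooth.continuous).add
        ((cu2 s).continuous.mul (cp s).pdy_smooth.continuous)
    have cG3 : Continuous (fun z => u1 s z * lapl (u1 s) z + u2 s z * lapl (u2 s) z) :=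
      ((cu1 s).continuous.mul (cu1 s).lapl_smooth.continuous).add
        ((cu2 s).continuous.mul (cu2 s).lapl_smooth.continuous)
    have cG4 : Continuous (fun z => u1 s z * lapl (lapl (u1 s)) z
        + u2 s z * lapl (lapl (u2 s)) z) :=
      ((cu1 s).continuous.mul (cu1 s).lapl_smooth.lapl_smooth.continuous).add
        ((cu2 s).continuous.mul (cu2 s).lapl_smooth.lapl_smooth.continuous)
    have hT1 : ∫ z in box, (u1 s z * pdx (fun w => u1 s w * u1 s w + u2 s w * u2 s w) z
        + u2 s z * pdy (fun w => u1 s w * u1 s w + u2 s w * u2 s w) z) = 0 :=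
      div_transport (cu1 s) (cu2 s) cφ (pu1 s) (pu2 s) pφ (hsol.divfree s)
    have hT2 : ∫ z in box, (u1 s z * pdx (p s) z + u2 s z * pdy (p s) z) = 0 :=
      div_transport (cu1 s) (cu2 s) (cp s) (pu1 s) (pu2 s) (pp s) (hsol.divfree s)
    have hT3 : ∫ z in box, (u1 s z * lapl (u1 s) z + u2 s z * lapl (u2 s) z)
        = -((∫ z in box, ((pdx (u1 s) z)^2 + (pdy (u1 s) z)^2))
            + ∫ z in box, ((pdx (u2 s) z)^2 + (pdy (u2 s) z)^2)) := by
      rw [integral_add (f := fun z => u1 s z * lapl (u1 s) z) (g := fun z => u2 s z * lapl (u2 s) z)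
        (integrableOn_box ((cu1 s).continuous.mul (cu1 s).lapl_smooth.continuous))
        (integrableOn_box ((cu2 s).continuous.mul (cu2 s).lapl_smooth.continuous)),
        green_self (cu1 s) (pu1 s), green_self (cu2 s) (pu2 s)]
      ring
    have hT4 : ∫ z in box, (u1 s z * lapl (lapl (u1 s)) z + u2 s z * lapl (lapl (u2 s)) z)
        = (∫ z in box, (lapl (u1 s) z)^2) + ∫ z in box, (lapl (u2 s) z)^2 := by
      rw [integral_add (f := fun z => u1 s z * lapl (lapl (u1 s)) z)
        (g := fun z => u2 s z * lapl (lapl (u2 s)) z)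
        (integrableOn_box ((cu1 s).continuous.mul (cu1 s).lapl_smooth.lapl_smooth.continuous))
        (integrableOn_box ((cu2 s).continuous.mul (cu2 s).lapl_smooth.lapl_smooth.continuous)),
        bilapl_energy (cu1 s) (pu1 s), bilapl_energy (cu2 s) (pu2 s)]
    have hsplit : D s
        = -(∫ z in box, (u1 s z * pdx (fun w => u1 s w * u1 s w + u2 s w * u2 s w) z
            + u2 s z * pdy (fun w => u1 s w * u1 s w + u2 s w * u2 s w) z))
          + (-2) * (∫ z in box, (u1 s z * pdx (p s) z + u2 s z * pdy (p s) z))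
          + (-(2*b)) * (∫ z in box, (u1 s z * lapl (u1 s) z + u2 s z * lapl (u2 s) z))
          + (-(2*d)) * (∫ z in box, (u1 s z * lapl (lapl (u1 s)) z
              + u2 s z * lapl (lapl (u2 s)) z)) := by
      show (∫ z in box, (2 * u1 s z * dtt u1 s z + 2 * u2 s z * dtt u2 s z)) = _
      rw [setIntegral_congr_fun measurableSet_box (fun z _ => pt z)]
      have iA : IntegrableOn (fun z : ℝ × ℝ => -(u1 s z * pdx (fun w => u1 s w * u1 s w + u2 s w * u2 s w) z + u2 s z * pdy (fun w => u1 s w * u1 s w + u2 s w * u2 s w) z)) box :=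
        integrableOn_box (cG1.neg :
          Continuous fun z : ℝ × ℝ => -(u1 s z * pdx (fun w => u1 s w * u1 s w + u2 s w * u2 s w) z + u2 s z * pdy (fun w => u1 s w * u1 s w + u2 s w * u2 s w) z))
      have iB : IntegrableOn (fun z : ℝ × ℝ => (-2) * (u1 s z * pdx (p s) z + u2 s z * pdy (p s) z)) box :=
        integrableOn_box ((continuous_const.mul cG2) :
          Continuous fun z : ℝ × ℝ => (-2) * (u1 s z * pdx (p s) z + u2 s z * pdy (p s) z))
      have iC : IntegrableOn (fun z : ℝ × ℝ => (-(2*b)) * (u1 s z * lapl (u1 s) z + u2 s z * lapl (u2 s) z)) box :=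
        integrableOn_box ((continuous_const.mul cG3) :
          Continuous fun z : ℝ × ℝ => (-(2*b)) * (u1 s z * lapl (u1 s) z + u2 s z * lapl (u2 s) z))
      have iD : IntegrableOn (fun z : ℝ × ℝ => (-(2*d)) * (u1 s z * lapl (lapl (u1 s)) z + u2 s z * lapl (lapl (u2 s)) z)) box :=
        integrableOn_box ((continuous_const.mul cG4) :
          Continuous fun z : ℝ × ℝ => (-(2*d)) * (u1 s z * lapl (lapl (u1 s)) z + u2 s z * lapl (lapl (u2 s)) z))
      have iAB : IntegrableOn (fun z : ℝ × ℝ => -(u1 s z * pdx (fun w => u1 s w * u1 s w + u2 s w * u2 s w) z + u2 s z * pdy (fun w => u1 s w * u1 s w + u2 s w * u2 s w) z) + (-2) * (u1 s z * pdx (p s) z + u2 s z * pdy (p s) z)) box :=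
        integrableOn_box ((cG1.neg.add (continuous_const.mul cG2)) :
          Continuous fun z : ℝ × ℝ => -(u1 s z * pdx (fun w => u1 s w * u1 s w + u2 s w * u2 s w) z + u2 s z * pdy (fun w => u1 s w * u1 s w + u2 s w * u2 s w) z) + (-2) * (u1 s z * pdx (p s) z + u2 s z * pdy (p s) z))
      have iABC : IntegrableOn (fun z : ℝ × ℝ => -(u1 s z * pdx (fun w => u1 s w * u1 s w + u2 s w * u2 s w) z + u2 s z * pdy (fun w => u1 s w * u1 s w + u2 s w * u2 s w) z) + (-2) * (u1 s z * pdx (p s) z + u2 s z * pdy (p s) z) + (-(2*b)) * (u1 s z * lapl (u1 s) z + u2 s z * lapl (u2 s) z)) box :=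
        integrableOn_box (((cG1.neg.add (continuous_const.mul cG2)).add
          (continuous_const.mul cG3)) :
          Continuous fun z : ℝ × ℝ => -(u1 s z * pdx (fun w => u1 s w * u1 s w + u2 s w * u2 s w) z + u2 s z * pdy (fun w => u1 s w * u1 s w + u2 s w * u2 s w) z) + (-2) * (u1 s z * pdx (p s) z + u2 s z * pdy (p s) z) + (-(2*b)) * (u1 s z * lapl (u1 s) z + u2 s z * lapl (u2 s) z))
      rw [integral_add iABC iD, integral_add iAB iC, integral_add iA iB,
        integral_neg, MeasureTheory.integral_const_mul, MeasureTheory.integral_const_mul,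
        MeasureTheory.integral_const_mul]
    rw [hsplit, hT1, hT2, hT3, hT4]
    have hme1 : ∫ z in box, u1 s z = 0 := (hmean s).1
    have hme2 : ∫ z in box, u2 s z = 0 := (hmean s).2
    have hp1 := poincare_box (cu1 s) (pu1 s) hme1
    have hp2 := poincare_box (cu2 s) (pu2 s) hme2
    have hg1 := grad_le_lapl (cu1 s) (pu1 s) hme1
    have hg2 := grad_le_lapl (cu2 s) (pu2 s) hme2
    have hEs : E s = (∫ z in box, (u1 s z)^2) + ∫ z in box, (u2 s z)^2 := by
      show (∫ z in box, ((u1 s z)^2 + (u2 s z)^2)) = _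
      rw [integral_add (f := fun z => (u1 s z)^2) (g := fun z => (u2 s z)^2)
        (integrableOn_box ((cu1 s).continuous.pow 2))
        (integrableOn_box ((cu2 s).continuous.pow 2))]
    rw [hEs]
    have hN1nn : 0 ≤ ∫ z in box, ((pdx (u1 s) z)^2 + (pdy (u1 s) z)^2) :=
      setIntegral_nonneg measurableSet_box (fun z _ => by positivity)
    have hN2nn : 0 ≤ ∫ z in box, ((pdx (u2 s) z)^2 + (pdy (u2 s) z)^2) :=
      setIntegral_nonneg measurableSet_box (fun z _ => by positivity)
    nlinarith [hp1, hp2, hg1, hg2, hN1nn, hN2nn, hb, hbd,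
      mul_le_mul_of_nonneg_left hg1 (by linarith : (0:ℝ) ≤ 2*d),
      mul_le_mul_of_nonneg_left hg2 (by linarith : (0:ℝ) ≤ 2*d),
      mul_le_mul_of_nonneg_left hp1 (by linarith : (0:ℝ) ≤ 2*(d-b)),
      mul_le_mul_of_nonneg_left hp2 (by linarith : (0:ℝ) ≤ 2*(d-b))]
  -- Grönwall
  set ψ : ℝ → ℝ := fun s => E s * Real.exp (2*(d-b)*s) with hψdef
  have hψ' : ∀ s, HasDerivAt ψ ((D s + 2*(d-b) * E s) * Real.exp (2*(d-b)*s)) s := by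
    intro s
    have hlin : HasDerivAt (fun s : ℝ => 2*(d-b)*s) (2*(d-b)) s := by
      simpa using (hasDerivAt_id s).const_mul (2*(d-b))
    have hexp := hlin.exp
    have hmul : HasDerivAt (fun s => E s * Real.exp (2*(d-b)*s)) _ s := (hE' s).mul hexp
    convert hmul using 1
    ring
  have hψmono : Antitone ψ := by
    apply antitone_of_deriv_nonpos
    · exact fun s => (hψ' s).differentiableAt
    · intro s
      rw [(hψ' s).deriv]
      have h1 : D s + 2*(d-b) * E s ≤ 0 := by linarith [hDle s]
      calc (D s + 2*(d-b) * E s) * Real.exp (2*(d-b)*s)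
          ≤ 0 * Real.exp (2*(d-b)*s) :=
            mul_le_mul_of_nonneg_right h1 (Real.exp_nonneg _)
        _ = 0 := by ring
  intro t ht
  have hψt : ψ t ≤ ψ 0 := hψmono ht
  have hψ0 : ψ 0 = E 0 := by
    rw [hψdef]
    simp
  have hEt : E t ≤ Real.exp (-(2*(d-b))*t) * E 0 := by
    have key : E t = ψ t * Real.exp (-(2*(d-b))*t) := by
      rw [hψdef]
      show E t = E t * Real.exp (2*(d-b)*t) * Real.exp (-(2*(d-b))*t)
      rw [mul_assoc, ← Real.exp_add]
      have : 2*(d-b)*t + -(2*(d-b))*t = 0 := by ring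
      rw [this, Real.exp_zero, mul_one]
    rw [key, ← hψ0]
    calc ψ t * Real.exp (-(2*(d-b))*t) ≤ ψ 0 * Real.exp (-(2*(d-b))*t) :=
          mul_le_mul_of_nonneg_right hψt (Real.exp_nonneg _)
      _ = Real.exp (-(2*(d-b))*t) * ψ 0 := by ring
  show Real.sqrt (E t) ≤ Real.exp (-(d-b)*t) * Real.sqrt (E 0)
  calc Real.sqrt (E t) ≤ Real.sqrt (Real.exp (-(2*(d-b))*t) * E 0) := Real.sqrt_le_sqrt hEt
    _ = Real.sqrt (Real.exp (-(2*(d-b))*t)) * Real.sqrt (E 0) :=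
        Real.sqrt_mul (Real.exp_nonneg _) _
    _ = Real.exp (-(d-b)*t) * Real.sqrt (E 0) := by
        have h1 : Real.sqrt (Real.exp (-(2*(d-b))*t)) = Real.exp ((-(2*(d-b))*t)/2) :=
          (Real.exp_half _).symm
        have h2 : (-(2*(d-b))*t)/2 = -(d-b)*t := by ring
        rw [h1, h2]
end
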